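/- arXiv:2106.15677 — 2 statements merged into one kernel-verified Lean document; each statement's English description precedes it below -/
import Mathlib

section
/- Fix integers t and n with n ≥ 1 and t² ≤ 4n, and a prime p ≥ 5 with p ∤ n and p | (t² − 4n) (this includes the case t² = 4n). Let k ≠ 2 be a non-negative even integer and m ≥ 1 an integer. Then n · P_{k+m(p²−1)}(t, n) ≡ (k − m − 1) · n^{k/2} (mod p); equivalently, P_{k+m(p²−1)}(t, n) ≡ (k − m − 1) · n^{(k−2)/2} (mod p), interpreting n^{(k−2)/2} as the inverse of n mod p when k = 0. -/
/-!
`P_k(t, n)` is the Lucas sequence `U_{k-1}(t, n)`. When `p ∣ t² - 4n` the characteristic polynomial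
`X² - tX + n` has a double root `r = t/2` modulo `p`, and then `U_j ≡ j r^(j-1)`, so that
`n P_k ≡ (k - 1) r^k`. For `k' = k + m(p² - 1)` we have `k' ≡ k - m` and, by Fermat in `𝔽_p`,
`r^k' = r^k = n^(k/2)`.
-/

open scoped UpperHalfPlane
open Complex Polynomial

noncomputable section

namespace SSTrace

/-- `P t n k` is the coefficient of `x^(k-2)` in the formal power series expansion
of `(1 - t·x + n·x²)⁻¹`. -/
def P (t n : ℤ) (k : ℕ) : ℤ :=
  PowerSeries.coeff (R := ℤ) (k - 2)
    (PowerSeries.invOfUnit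
      (1 - PowerSeries.C (R := ℤ) t * PowerSeries.X + PowerSeries.C (R := ℤ) n * PowerSeries.X ^ 2) 1)

section Lucas

variable {R : Type*} [CommRing R]

def lucasU (t n : R) : ℕ → R
  | 0 => 0
  | 1 => 1
  | j + 2 => t * lucasU t n (j + 1) - n * lucasU t n j

theorem map_lucasU {S : Type*} [CommRing S] (f : R →+* S) (t n : R) (j : ℕ) :
    f (lucasU t n j) = lucasU (f t) (f n) j := by
  induction j using Nat.twoStepInduction with
  | zero => simp [lucasU]
  | one => simp [lucasU]
  | more j ih₀ ih₁ => simp [lucasU, ih₀, ih₁]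

theorem lucasU_succ_of_double_root {t n r : R} (ht : t = 2 * r) (hn : n = r ^ 2) (j : ℕ) :
    lucasU t n (j + 1) = (j + 1) * r ^ j := by
  induction j using Nat.twoStepInduction with
  | zero => simp [lucasU]
  | one => simp [lucasU, ht]; ring
  | more j ih₀ ih₁ =>
    rw [lucasU, ih₁, ih₀, ht, hn]
    push_cast
    ring

theorem mul_mk_lucasU_succ (t n : R) :
    (1 - PowerSeries.C t * PowerSeries.X + PowerSeries.C n * PowerSeries.X ^ 2) *
      PowerSeries.mk (fun j ↦ lucasU t n (j + 1)) = 1 := by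
  ext (_ | _ | j) <;>
    simp [sub_mul, add_mul, mul_assoc, PowerSeries.coeff_X_pow_mul', lucasU]

end Lucas

theorem P_add_two (t n : ℤ) (j : ℕ) : P t n (j + 2) = lucasU t n (j + 1) := by
  have hinv := left_inv_eq_right_inv (PowerSeries.invOfUnit_mul _ 1 (by simp))
    (mul_mk_lucasU_succ t n)
  rw [P, hinv, PowerSeries.coeff_mk, Nat.add_sub_cancel]

theorem intCast_mul_P_of_double_root {R : Type*} [CommRing R] {t n : ℤ} {r : R}
    (ht : (t : R) = 2 * r) (hn : (n : R) = r ^ 2) {k : ℕ} (hk : 2 ≤ k) :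
    n * P t n k = ((k : R) - 1) * r ^ k := by
  obtain ⟨j, rfl⟩ := Nat.exists_eq_add_of_le' hk
  have hcast := map_lucasU (Int.castRingHom R) t n (j + 1)
  rw [eq_intCast, eq_intCast, eq_intCast, ht, hn, lucasU_succ_of_double_root rfl rfl] at hcast
  rw [P_add_two, hcast, hn]
  push_cast
  ring

theorem exists_double_root_of_dvd_discrim {p : ℕ} [Fact p.Prime] (hp : p ≠ 2) {t n : ℤ}
    (hpd : (p : ℤ) ∣ t ^ 2 - 4 * n) : ∃ r : ZMod p, (t : ZMod p) = 2 * r ∧ (n : ZMod p) = r ^ 2 := by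
  have h2 : (2 : ZMod p) ≠ 0 := Ring.two_ne_zero (by rwa [ZMod.ringChar_zmod_n])
  have hdisc : (t : ZMod p) ^ 2 - 4 * n = 0 := by
    exact_mod_cast (ZMod.intCast_zmod_eq_zero_iff_dvd _ p).mpr hpd
  refine ⟨t / 2, by field_simp, ?_⟩
  field_simp
  linear_combination -hdisc

theorem pow_sq_sub_one_eq_one {p : ℕ} [Fact p.Prime] {r : ZMod p} (hr : r ≠ 0) :
    r ^ (p ^ 2 - 1) = 1 := by
  rw [show p ^ 2 - 1 = (p + 1) * (p - 1) by simpa using Nat.sq_sub_sq p 1, pow_mul',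
    ZMod.pow_card_sub_one_eq_one hr, one_pow]

theorem P_ramified_general (p : ℕ) [Fact p.Prime] (hp : 5 ≤ p) (t n : ℤ)
    (hpn : ¬ (p : ℤ) ∣ n) (hpd : (p : ℤ) ∣ (t ^ 2 - 4 * n))
    (k : ℕ) (hke : Even k) (m : ℕ) (hm : 1 ≤ m) :
    n * P t n (k + m * (p ^ 2 - 1)) ≡ ((k : ℤ) - (m : ℤ) - 1) * n ^ (k / 2) [ZMOD (p : ℤ)] := by
  obtain ⟨r, ht, hnr⟩ := exists_double_root_of_dvd_discrim (by omega) hpd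
  have hr : r ≠ 0 := by
    rintro rfl
    exact hpn ((ZMod.intCast_zmod_eq_zero_iff_dvd n p).mp (by simpa using hnr))
  have hp2 : 1 ≤ p ^ 2 := Nat.one_le_pow _ _ (by omega)
  have hweight : 2 ≤ k + m * (p ^ 2 - 1) := by
    have hp25 : 5 ^ 2 ≤ p ^ 2 := Nat.pow_le_pow_left hp 2
    have := Nat.mul_le_mul hm (show 2 ≤ p ^ 2 - 1 by omega)
    omega
  rw [← ZMod.intCast_eq_intCast_iff, Int.cast_mul, intCast_mul_P_of_double_root ht hnr hweight,
    pow_add, pow_mul', pow_sq_sub_one_eq_one hr, one_pow, mul_one]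
  obtain ⟨c, rfl⟩ := hke
  push_cast [Nat.cast_sub hp2, ZMod.natCast_self, hnr]
  rw [← pow_mul, show c + c = c * 2 by ring, Nat.mul_div_cancel _ two_pos]
  ring

/-- Lemma 2.4 (ramified case): if `p ∤ n`, `p ∣ t² - 4n`, and `t² ≤ 4n`, then for even
`k ≠ 2` and `m ≥ 1`: `n · P_{k+m(p²-1)}(t,n) ≡ (k - m - 1) · n^{k/2} (mod p)`. -/
theorem P_ramified (p : ℕ) [Fact p.Prime] (hp : 5 ≤ p) (t n : ℤ) (hn : 1 ≤ n)
    (hdisc : t ^ 2 ≤ 4 * n) (hpn : ¬ (p : ℤ) ∣ n) (hpd : (p : ℤ) ∣ (t ^ 2 - 4 * n))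
    (k : ℕ) (hke : Even k) (hk2 : k ≠ 2) (m : ℕ) (hm : 1 ≤ m) :
    n * P t n (k + m * (p ^ 2 - 1)) ≡ ((k : ℤ) - (m : ℤ) - 1) * n ^ (k / 2) [ZMOD (p : ℤ)] :=
  P_ramified_general p hp t n hpn hpd k hke m hm

end SSTrace
end
end

section
/- For every prime p ≥ 5 and integer n ≥ 1, the divisor polynomial of the n-th power of the weight p−1 Eisenstein series satisfies F(E_{p−1}ⁿ; x) ≡ F(E_{p−1}; x)ⁿ · x^{δ_p·⌊n/3⌋} · (x − 1728)^{ε_p·⌊n/2⌋} in 𝔽_p[x]. -/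
/-!
Since `E₄³ = Δ j` and `E₆² = Δ (j - 1728)`, raising `f = Δ^m E₄^δ E₆^ε F(j)` to the `n`-th
power and turning the surplus factors `E₄³` and `E₆²` into `Δ j` and `Δ (j - 1728)` shows
that `F(fⁿ)` and `F(f)ⁿ j^{δ_p⌊n/3⌋} (j - 1728)^{ε_p⌊n/2⌋}` agree at `j(z)` whenever
`Δ`, `E₄`, `E₆` do not vanish at `z`. As `Im z → ∞` we have `q → 0`, `E₄, E₆ → 1` and
`Δ ~ q`, so at such points `j(z) → ∞`. The two polynomials thus agree at infinitely many
points and are equal already over `ℚ`, which is stronger than the congruence modulo `p`.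
-/

open scoped UpperHalfPlane
open Complex Polynomial

noncomputable section

namespace SSTrace

/-- `q = exp(2πiz)`. -/
def qq (z : ℍ) : ℂ := Complex.exp (2 * Real.pi * Complex.I * (z : ℂ))

/-- The divisor-sum function `σ_k(n)`. -/
def sigma (k n : ℕ) : ℕ := ∑ d ∈ n.divisors, d ^ k

/-- The normalized Eisenstein series of weight `k`, given by its `q`-expansion
`E_k = 1 - (2k/B_k) ∑_{n ≥ 1} σ_{k-1}(n) qⁿ`. -/
def Eis (k : ℕ) : ℍ → ℂ :=
  fun z => 1 - (2 * k / ((bernoulli' k : ℚ) : ℂ)) *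
    ∑' n : ℕ, (sigma (k - 1) (n + 1) : ℂ) * qq z ^ (n + 1)

/-- The normalized Eisenstein series `E₄`. -/
def E4 : ℍ → ℂ := Eis 4

/-- The normalized Eisenstein series `E₆`. -/
def E6 : ℍ → ℂ := Eis 6

/-- The discriminant cusp form `Δ = (E₄³ - E₆²)/1728`. -/
def Disc : ℍ → ℂ := fun z => (E4 z ^ 3 - E6 z ^ 2) / 1728

/-- The modular `j`-function `j = E₄³/Δ`. -/
def jFun : ℍ → ℂ := fun z => E4 z ^ 3 / Disc z

/-- `δ(w) ∈ {0,1,2}` according as `w ≡ 0, 4, 2 (mod 6)` (for even `w`). -/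
def deltaExp (w : ℕ) : ℕ := if w % 6 = 0 then 0 else if w % 6 = 4 then 1 else 2

/-- `ε(w) ∈ {0,1}` according as `w ≡ 0, 2 (mod 4)` (for even `w`). -/
def epsExp (w : ℕ) : ℕ := if w % 4 = 0 then 0 else 1

/-- `m(w)` with `w = 12·m(w) + 4·δ(w) + 6·ε(w)`. -/
def mExp (w : ℕ) : ℕ := (w - 4 * deltaExp w - 6 * epsExp w) / 12

/-- `HasDivPoly w f F` says that the weight-`w` modular form `f` decomposes as
`f = Δ^m E₄^δ E₆^ε F(j)`, i.e. that `F` is the divisor polynomial of `f`. -/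
def HasDivPoly (w : ℕ) (f : ℍ → ℂ) (F : Polynomial ℂ) : Prop :=
  ∀ z : ℍ, f z = Disc z ^ mExp w * E4 z ^ deltaExp w * E6 z ^ epsExp w * F.eval (jFun z)

/-- `δ_p`: `0` if `p ≡ 1 (mod 3)`, `1` if `p ≡ 2 (mod 3)`. -/
def deltaP (p : ℕ) : ℕ := if p % 3 = 1 then 0 else 1

/-- `ε_p`: `0` if `p ≡ 1 (mod 4)`, `1` if `p ≡ 3 (mod 4)`. -/
def epsP (p : ℕ) : ℕ := if p % 4 = 1 then 0 else 1

/-- A rational number is `p`-integral. -/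
def PInt (p : ℕ) (x : ℚ) : Prop := ∃ a b : ℤ, ((b : ZMod p) ≠ 0) ∧ x = (a : ℚ) / b

/-- Two rational numbers are congruent modulo `p` (their difference is `p` times a
`p`-integral rational). -/
def QCongr (p : ℕ) (x y : ℚ) : Prop :=
  ∃ a b : ℤ, ((b : ZMod p) ≠ 0) ∧ x - y = p * (a : ℚ) / b

open Filter Topology UpperHalfPlane

lemma qCongr_refl (p : ℕ) [Fact (1 < p)] (x : ℚ) : QCongr p x x :=
  ⟨0, 1, by simp, by simp⟩

section Weights

lemma weight_eq {w : ℕ} (hw : w % 2 = 0) (hw2 : w ≠ 2) :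
    w = 12 * mExp w + 4 * deltaExp w + 6 * epsExp w := by
  simp only [deltaExp, epsExp, mExp]
  split_ifs <;> omega

variable {p : ℕ}

lemma mul_deltaExp (hp2 : p % 2 = 1) (hp3 : p % 3 ≠ 0) (n : ℕ) :
    n * deltaExp (p - 1) = deltaExp (n * (p - 1)) + 3 * (deltaP p * (n / 3)) := by
  have := Nat.mul_mod n (p - 1) 6
  simp only [deltaExp, deltaP]
  rcases (by omega : (p - 1) % 6 = 0 ∨ (p - 1) % 6 = 4) with h | h <;> rw [h] at this <;>
    split_ifs <;> omega

lemma mul_epsExp (hp2 : p % 2 = 1) (n : ℕ) :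
    n * epsExp (p - 1) = epsExp (n * (p - 1)) + 2 * (epsP p * (n / 2)) := by
  have := Nat.mul_mod n (p - 1) 4
  simp only [epsExp, epsP]
  rcases (by omega : (p - 1) % 4 = 0 ∨ (p - 1) % 4 = 2) with h | h <;> rw [h] at this <;>
    split_ifs <;> omega

lemma mExp_mul (hp5 : 5 ≤ p) (hp2 : p % 2 = 1) (hp3 : p % 3 ≠ 0) (n : ℕ) :
    mExp (n * (p - 1)) = n * mExp (p - 1) + deltaP p * (n / 3) + epsP p * (n / 2) := by
  have hw := weight_eq (w := p - 1) (by omega) (by omega)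
  have hnw_ne : n * (p - 1) ≠ 2 := by
    rcases n with _ | n
    · simp
    · have : p - 1 ≤ (n + 1) * (p - 1) := Nat.le_mul_of_pos_left _ n.succ_pos
      omega
  have hnw := weight_eq (by simp [Nat.mul_mod, (by omega : (p - 1) % 2 = 0)]) hnw_ne
  have := mul_deltaExp hp2 hp3 n
  have := mul_epsExp hp2 n
  have : n * (p - 1) = n * (12 * mExp (p - 1) + 4 * deltaExp (p - 1) + 6 * epsExp (p - 1)) := by
    rw [← hw]
  linarith

def weightFactor {M : Type*} [Monoid M] (w : ℕ) (D A B : M) : M :=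
  D ^ mExp w * A ^ deltaExp w * B ^ epsExp w

lemma weightFactor_pow {M : Type*} [CommMonoid M] (hp5 : 5 ≤ p) (hp2 : p % 2 = 1)
    (hp3 : p % 3 ≠ 0) {D A B J J' : M} (hA : A ^ 3 = D * J) (hB : B ^ 2 = D * J') (n : ℕ) :
    weightFactor (p - 1) D A B ^ n =
      weightFactor (n * (p - 1)) D A B *
        (J ^ (deltaP p * (n / 3)) * J' ^ (epsP p * (n / 2))) := by
  simp only [weightFactor, mul_pow, ← pow_mul]
  rw [mul_comm _ n, mul_comm _ n, mul_comm _ n, mul_deltaExp hp2 hp3, mul_epsExp hp2,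
    mExp_mul hp5 hp2 hp3, pow_add A, pow_add B, pow_mul A 3, pow_mul B 2, hA, hB,
    mul_pow D J, mul_pow D J', pow_add, pow_add]
  simp only [mul_assoc, mul_comm, mul_left_comm]

end Weights

theorem bernoulli'_six : bernoulli' 6 = 1 / 42 := by
  have h5 : bernoulli' 5 = 0 := bernoulli'_eq_zero_of_odd (by decide) (by norm_num)
  have h62 : Nat.choose 6 2 = 15 := by decide
  have h63 : Nat.choose 6 3 = 20 := by decide
  have h64 : Nat.choose 6 4 = 15 := by decide
  rw [bernoulli'_def]
  norm_num [Finset.sum_range_succ, h5, h62, h63, h64]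

lemma sigma_le_pow_succ (k m : ℕ) : sigma k m ≤ m ^ (k + 1) :=
  calc sigma k m ≤ m.divisors.card • m ^ k :=
        Finset.sum_le_card_nsmul _ _ _ fun _ hd => Nat.pow_le_pow_left (Nat.divisor_le hd) k
    _ ≤ m * m ^ k := by rw [smul_eq_mul]; gcongr; exact Nat.card_divisors_le_self m
    _ = m ^ (k + 1) := (pow_succ' m k).symm

def sigmaSeries (k : ℕ) (q : ℂ) : ℂ := ∑' n : ℕ, (sigma k (n + 1) : ℂ) * q ^ n

lemma continuousOn_sigmaSeries (k : ℕ) :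
    ContinuousOn (sigmaSeries k) (Metric.closedBall 0 (1 / 2)) := by
  have hu : Summable fun n : ℕ => ((n + 1 : ℕ) : ℝ) ^ (k + 1) * (1 / 2) ^ n := by
    have := (summable_nat_add_iff 1).mpr
      (summable_pow_mul_geometric_of_norm_lt_one (k + 1) (r := (1 / 2 : ℝ)) (by norm_num))
    exact (this.mul_left 2).congr fun n => by push_cast; ring
  refine continuousOn_tsum (fun n => by fun_prop) hu fun n q hq => ?_
  rw [mem_closedBall_zero_iff] at hq
  rw [norm_mul, norm_pow, Complex.norm_natCast]
  gcongr
  exact_mod_cast sigma_le_pow_succ k (n + 1)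

lemma tendsto_sigmaSeries (k : ℕ) : Tendsto (sigmaSeries k) (𝓝 0) (𝓝 1) := by
  have h0 : sigmaSeries k 0 = 1 := by
    rw [sigmaSeries, tsum_eq_single 0 fun n hn => by simp [hn]]
    simp [sigma]
  exact h0 ▸ ((continuousOn_sigmaSeries k).continuousAt
    (Metric.closedBall_mem_nhds 0 (by norm_num))).tendsto

lemma Eis_eq (k : ℕ) (z : ℍ) :
    Eis k z = 1 - 2 * k / (bernoulli' k : ℂ) * (qq z * sigmaSeries (k - 1) (qq z)) := by
  simp only [Eis, sigmaSeries, ← tsum_mul_left, pow_succ]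
  congr 3 with n
  ring

lemma E4_eq (z : ℍ) : E4 z = 1 + 240 * (qq z * sigmaSeries 3 (qq z)) := by
  rw [E4, Eis_eq, bernoulli'_four]
  push_cast
  ring

lemma E6_eq (z : ℍ) : E6 z = 1 - 504 * (qq z * sigmaSeries 5 (qq z)) := by
  rw [E6, Eis_eq, bernoulli'_six]
  push_cast
  ring

lemma tendsto_qq_atImInfty : Tendsto qq atImInfty (𝓝 0) := by
  convert qParam_tendsto_atImInfty one_pos using 2 with z
  simp [qq, Function.Periodic.qParam]

lemma tendsto_E4_atImInfty : Tendsto E4 atImInfty (𝓝 1) := by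
  have := tendsto_qq_atImInfty.mul ((tendsto_sigmaSeries 3).comp tendsto_qq_atImInfty)
  simpa [funext E4_eq] using (this.const_mul 240).const_add 1

lemma tendsto_E6_atImInfty : Tendsto E6 atImInfty (𝓝 1) := by
  have := tendsto_qq_atImInfty.mul ((tendsto_sigmaSeries 5).comp tendsto_qq_atImInfty)
  simpa [funext E6_eq] using (this.const_mul 504).const_sub 1

lemma tendsto_Disc_div_qq_atImInfty : Tendsto (fun z => Disc z / qq z) atImInfty (𝓝 1) := by
  -- `Δ / q` as a polynomial in `q`, `g₃ = sigmaSeries 3 q`, `g₅ = sigmaSeries 5 q`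
  let Φ : ℂ × ℂ × ℂ → ℂ := fun x =>
    (720 * x.2.1 + 1008 * x.2.2 + x.1 * (172800 * x.2.1 ^ 2 - 254016 * x.2.2 ^ 2) +
      x.1 ^ 2 * (13824000 * x.2.1 ^ 3)) / 1728
  have hΦ : Tendsto Φ (𝓝 (0, 1, 1)) (𝓝 1) := by
    convert (show Continuous Φ by fun_prop).tendsto (0, 1, 1) using 2
    norm_num [Φ]
  refine (hΦ.comp (tendsto_qq_atImInfty.prodMk_nhds
    (((tendsto_sigmaSeries 3).comp tendsto_qq_atImInfty).prodMk_nhds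
      ((tendsto_sigmaSeries 5).comp tendsto_qq_atImInfty)))).congr fun z => ?_
  have : qq z ≠ 0 := Complex.exp_ne_zero _
  simp only [Function.comp, Φ, Disc, E4_eq, E6_eq]
  field_simp
  ring

lemma eventually_Disc_ne_zero : ∀ᶠ z in atImInfty, Disc z ≠ 0 :=
  (tendsto_Disc_div_qq_atImInfty.eventually_ne one_ne_zero).mono fun _ h => left_ne_zero_of_mul h

lemma tendsto_Disc_atImInfty : Tendsto Disc atImInfty (𝓝 0) := by
  have := tendsto_Disc_div_qq_atImInfty.mul tendsto_qq_atImInfty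
  rw [one_mul] at this
  exact this.congr fun z => div_mul_cancel₀ _ (Complex.exp_ne_zero _)

lemma tendsto_jFun_atImInfty : Tendsto jFun atImInfty (Bornology.cobounded ℂ) := by
  have h := tendsto_Disc_atImInfty.div (tendsto_E4_atImInfty.pow 3) (by norm_num)
  rw [zero_div] at h
  have hne : ∀ᶠ z in atImInfty, Disc z / E4 z ^ 3 ≠ 0 :=
    (eventually_Disc_ne_zero.and (tendsto_E4_atImInfty.eventually_ne one_ne_zero)).mono
      fun _ h => div_ne_zero h.1 (pow_ne_zero _ h.2)
  exact (tendsto_inv₀_nhdsNE_zero.comp (tendsto_nhdsWithin_iff.mpr ⟨h, hne⟩)).congr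
    fun z => inv_div _ _

lemma Polynomial.eq_zero_of_eventually_isRoot {K α : Type*} [CommRing K] [IsDomain K]
    [Bornology K] {l : Filter α} [l.NeBot] {f : α → K} {P : K[X]}
    (hf : Tendsto f l (Bornology.cobounded K)) (hP : ∀ᶠ a in l, P.IsRoot (f a)) : P = 0 := by
  by_contra h
  have hfar : ∀ᶠ a in l, f a ∉ {x | P.IsRoot x} :=
    hf (Bornology.isBounded_def.mp (Polynomial.finite_setOfPred_isRoot h).isBounded)
  obtain ⟨a, hroot, hnot⟩ := (hP.and hfar).exists
  exact hnot hroot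

lemma eval_jFun_of_hasDivPoly {p n : ℕ} (hp5 : 5 ≤ p) (hp2 : p % 2 = 1) (hp3 : p % 3 ≠ 0)
    {f : ℍ → ℂ} {F G : ℂ[X]} (hF : HasDivPoly (p - 1) f F)
    (hG : HasDivPoly (n * (p - 1)) (fun z => f z ^ n) G) {z : ℍ} (hD : Disc z ≠ 0)
    (hE4 : E4 z ≠ 0) (hE6 : E6 z ≠ 0) :
    G.eval (jFun z) =
      (F ^ n * X ^ (deltaP p * (n / 3)) * (X - C 1728) ^ (epsP p * (n / 2))).eval (jFun z) := by
  have hA : E4 z ^ 3 = Disc z * jFun z := by rw [jFun]; field_simp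
  have hB : E6 z ^ 2 = Disc z * (jFun z - 1728) := by
    rw [jFun]
    field_simp
    rw [Disc]
    ring
  have hFz : f z = weightFactor (p - 1) (Disc z) (E4 z) (E6 z) * F.eval (jFun z) := hF z
  have key : f z ^ n = weightFactor (n * (p - 1)) (Disc z) (E4 z) (E6 z) * G.eval (jFun z) := hG z
  rw [hFz, mul_pow, weightFactor_pow hp5 hp2 hp3 hA hB] at key
  refine mul_left_cancel₀ (by simp [weightFactor, hD, hE4, hE6]) (key.symm.trans ?_)
  simp only [eval_mul, eval_pow, eval_X, eval_sub, eval_C]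
  ring

theorem HasDivPoly.pow_eq {p n : ℕ} (hp5 : 5 ≤ p) (hp2 : p % 2 = 1) (hp3 : p % 3 ≠ 0)
    {f : ℍ → ℂ} {F G : ℂ[X]} (hF : HasDivPoly (p - 1) f F)
    (hG : HasDivPoly (n * (p - 1)) (fun z => f z ^ n) G) :
    G = F ^ n * X ^ (deltaP p * (n / 3)) * (X - C 1728) ^ (epsP p * (n / 2)) := by
  refine sub_eq_zero.mp (Polynomial.eq_zero_of_eventually_isRoot tendsto_jFun_atImInfty ?_)
  filter_upwards [eventually_Disc_ne_zero, tendsto_E4_atImInfty.eventually_ne one_ne_zero,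
    tendsto_E6_atImInfty.eventually_ne one_ne_zero] with z hD hE4 hE6
  rw [IsRoot, eval_sub, sub_eq_zero]
  exact eval_jFun_of_hasDivPoly hp5 hp2 hp3 hF hG hD hE4 hE6

theorem divPoly_eisenstein_pow_general (p : ℕ) [Fact p.Prime] (hp : 5 ≤ p) (n : ℕ)
    (F Fn : Polynomial ℚ)
    (hF : HasDivPoly (p - 1) (Eis (p - 1)) (F.map (algebraMap ℚ ℂ)))
    (hFn : HasDivPoly (n * (p - 1)) (fun z => Eis (p - 1) z ^ n) (Fn.map (algebraMap ℚ ℂ))) :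
    ∀ i : ℕ, QCongr p (Fn.coeff i)
      ((F ^ n * X ^ (deltaP p * (n / 3)) *
        (X - C (1728 : ℚ)) ^ (epsP p * (n / 2))).coeff i) := by
  have hprime : p.Prime := Fact.out
  have hp2 : p % 2 = 1 := by have := hprime.eq_one_or_self_of_dvd 2; omega
  have hp3 : p % 3 ≠ 0 := by have := hprime.eq_one_or_self_of_dvd 3; omega
  have hFn_eq : Fn = F ^ n * X ^ (deltaP p * (n / 3)) * (X - C 1728) ^ (epsP p * (n / 2)) := by
    apply Polynomial.map_injective _ (algebraMap ℚ ℂ).injective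
    simpa using HasDivPoly.pow_eq hp hp2 hp3 hF hFn
  intro i
  rw [hFn_eq]
  exact qCongr_refl p _

/-- Proposition 3.2: for `p ≥ 5` prime and `n ≥ 1`,
`F(E_{p-1}ⁿ;x) ≡ F(E_{p-1};x)ⁿ · x^{δ_p⌊n/3⌋} · (x-1728)^{ε_p⌊n/2⌋}` in `𝔽_p[x]`. -/
theorem divPoly_eisenstein_pow (p : ℕ) [Fact p.Prime] (hp : 5 ≤ p) (n : ℕ) (hn : 1 ≤ n)
    (F Fn : Polynomial ℚ)
    (hF : HasDivPoly (p - 1) (Eis (p - 1)) (F.map (algebraMap ℚ ℂ)))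
    (hFn : HasDivPoly (n * (p - 1)) (fun z => Eis (p - 1) z ^ n) (Fn.map (algebraMap ℚ ℂ))) :
    ∀ i : ℕ, QCongr p (Fn.coeff i)
      ((F ^ n * X ^ (deltaP p * (n / 3)) *
        (X - C (1728 : ℚ)) ^ (epsP p * (n / 2))).coeff i) :=
  divPoly_eisenstein_pow_general p hp n F Fn hF hFn

end SSTrace
end
end
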